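/- arXiv:2007.00100 — 8 statements merged into one kernel-verified Lean document; each statement's English description precedes it below -/
import Mathlib

section
/- For every instance of the adversarial assignment problem (any number of tasks k, number of agents N, failure limit α ≤ N, and nonincreasing nonnegative profits t_1 ≥ t_2 ≥ ⋯ ≥ t_k ≥ 0), there exists an assignment x̃ that maximizes the worst-case profit g over all valid assignments and whose coordinates are nonincreasing, i.e., x̃_i ≥ x̃_j for all 1 ≤ i < j ≤ k. -/
/-- Shifted Heaviside function `H(n) = min(1, n)`, as a real number. -/
noncomputable def H (n : ℕ) : ℝ := min 1 (n : ℝ)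

/-- The worst-case profit `g(x) = min_{δ ∈ Δ_α(x)} Σ_i t_i · H(x_i − δ_i)`
of an assignment `x`, where `Δ_α(x)` is the (finite, nonempty) set of attacks
`δ` with `Σ_i δ_i ≤ α` and `δ_i ≤ x_i` for all `i`. -/
noncomputable def worstProfit {k : ℕ} (t : Fin k → ℝ) (α : ℕ) (x : Fin k → ℕ) : ℝ :=
  ((Finset.Icc 0 x).filter (fun δ => ∑ i, δ i ≤ α)).inf'
    ⟨0, Finset.mem_filter.mpr ⟨Finset.mem_Icc.mpr ⟨le_rfl, fun i => Nat.zero_le _⟩, by simp⟩⟩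
    (fun δ => ∑ i, t i * H (x i - δ i))

/-!
If an earlier (more profitable) task `i` receives fewer agents than a later
task `j`, swapping the two loads does not lower the worst-case profit: an attack on the swapped
assignment either wipes out task `j`, and then the swapped attack on the original assignment
wipes out the more profitable task `i` instead, or it leaves `j` alive, and then the same attack,
capped at `x i` on task `i`, does at least as much damage to the original assignment.
Among the optimal assignments, the lexicographically largest one is therefore nonincreasing,
since a swap at an ascent `x i < x j`, `i < j`, is lexicographically larger.
-/

open Function

lemma H_nonneg (n : ℕ) : 0 ≤ H n := le_min zero_le_one n.cast_nonneg

lemma H_le_one (n : ℕ) : H n ≤ 1 := min_le_left _ _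

lemma H_zero : H 0 = 0 := by simp [H]

lemma H_eq_one_of_pos {n : ℕ} (hn : 0 < n) : H n = 1 :=
  min_eq_left (by exact_mod_cast hn)

lemma H_mono : Monotone H := fun _ _ h => min_le_min_left 1 (by exact_mod_cast h)

section worstProfit

variable {k : ℕ} {t : Fin k → ℝ} {α : ℕ} {x : Fin k → ℕ}

lemma worstProfit_le {δ : Fin k → ℕ} (hδx : δ ≤ x) (hδα : ∑ i, δ i ≤ α) :
    worstProfit t α x ≤ ∑ i, t i * H (x i - δ i) :=
  Finset.inf'_le _ (by simp [hδx, hδα])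

lemma le_worstProfit {c : ℝ}
    (h : ∀ δ ≤ x, ∑ i, δ i ≤ α → c ≤ ∑ i, t i * H (x i - δ i)) : c ≤ worstProfit t α x :=
  Finset.le_inf' _ _ fun δ hδ => by
    simp only [Finset.mem_filter, Finset.mem_Icc] at hδ
    exact h δ hδ.1.2 hδ.2

lemma worstProfit_le_worstProfit_comp_swap {i j : Fin k} (hx : x i ≤ x j) (ht : t j ≤ t i)
    (hti : 0 ≤ t i) : worstProfit t α x ≤ worstProfit t α (x ∘ Equiv.swap i j) := by
  refine le_worstProfit fun δ hδ hδα => ?_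
  rcases le_or_gt (x i) (δ j) with hj | hj
  · calc worstProfit t α x ≤ ∑ u, t u * H (x u - δ (Equiv.swap i j u)) :=
          worstProfit_le (fun u => by simpa using hδ (Equiv.swap i j u))
            (by rwa [Equiv.sum_comp (Equiv.swap i j) δ])
      _ = ∑ u, t (Equiv.swap i j u) * H ((x ∘ Equiv.swap i j) u - δ u) := by
          rw [← Equiv.sum_comp (Equiv.swap i j)]
          simp
      _ ≤ ∑ u, t u * H ((x ∘ Equiv.swap i j) u - δ u) := by
          refine Finset.sum_le_sum fun u _ => ?_
          rcases eq_or_ne u i with rfl | hui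
          · simpa using mul_le_mul_of_nonneg_right ht (H_nonneg _)
          rcases eq_or_ne u j with rfl | huj
          · simp [Nat.sub_eq_zero_of_le hj, H_zero]
          · simp [Equiv.swap_apply_of_ne_of_ne hui huj]
  · calc worstProfit t α x ≤ ∑ u, t u * H (x u - update δ i (min (x i) (δ i)) u) := by
          refine worstProfit_le (fun u => ?_) ((Finset.sum_le_sum fun u _ => ?_).trans hδα)
          · rcases eq_or_ne u i with rfl | hui
            · simp
            rcases eq_or_ne u j with rfl | huj
            · simpa [hui] using hj.le.trans hx
            · simpa [hui, Equiv.swap_apply_of_ne_of_ne hui huj] using hδ u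
          · rcases eq_or_ne u i with rfl | hui
            · simp
            · simp [hui]
      _ ≤ ∑ u, t u * H ((x ∘ Equiv.swap i j) u - δ u) := by
          refine Finset.sum_le_sum fun u _ => ?_
          rcases eq_or_ne u i with rfl | hui
          · -- the cap does not change the truncated difference `x u - δ u`
            simpa [tsub_min] using mul_le_mul_of_nonneg_left (H_mono (Nat.sub_le_sub_right hx (δ u))) hti
          rcases eq_or_ne u j with rfl | huj
          · simp [hui, H_eq_one_of_pos (Nat.sub_pos_of_lt hj),
              H_eq_one_of_pos (Nat.sub_pos_of_lt (hj.trans_le hx))]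
          · simp [hui, Equiv.swap_apply_of_ne_of_ne hui huj]

end worstProfit

lemma toLex_lt_toLex_comp_swap {ι β : Type*} [LinearOrder ι] [LT β] {x : ι → β} {i j : ι}
    (hij : i < j) (hx : x i < x j) : toLex x < toLex (x ∘ Equiv.swap i j) :=
  ⟨i, fun u hu => by simp [Equiv.swap_apply_of_ne_of_ne hu.ne (hu.trans hij).ne], by simpa⟩

lemma finite_setOf_sum_le {ι : Type*} [Fintype ι] [DecidableEq ι] (N : ℕ) :
    {x : ι → ℕ | ∑ i, x i ≤ N}.Finite :=
  (Set.finite_Iic fun _ => N).subset fun x hx i =>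
    (Finset.single_le_sum (fun j _ => Nat.zero_le (x j)) (Finset.mem_univ i)).trans hx

theorem decreasing_optimal_assignment_general (k N α : ℕ)
    (t : Fin k → ℝ) (ht_mono : ∀ i j : Fin k, i ≤ j → t j ≤ t i)
    (ht_nonneg : ∀ i, 0 ≤ t i) :
    ∃ x' : Fin k → ℕ, (∑ i, x' i ≤ N) ∧
      (∀ i j : Fin k, i ≤ j → x' j ≤ x' i) ∧
      (∀ x : Fin k → ℕ, (∑ i, x i ≤ N) → worstProfit t α x ≤ worstProfit t α x') := by
  obtain ⟨x', hx'N, hx'max⟩ := Set.exists_max_image _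
    (fun x => toLex (worstProfit t α x, toLex x)) (finite_setOf_sum_le N) ⟨0, by simp⟩
  refine ⟨x', hx'N, fun i j hij => ?_, fun x hx => Prod.Lex.monotone_fst _ _ (hx'max x hx)⟩
  by_contra! hlt
  have hswap := hx'max (x' ∘ Equiv.swap i j) (by simpa [Equiv.sum_comp] using hx'N)
  refine hswap.not_gt (Prod.Lex.toLex_strictMono (Prod.mk_lt_mk_of_le_of_lt ?_ ?_))
  · exact worstProfit_le_worstProfit_comp_swap hlt.le (ht_mono i j hij) (ht_nonneg i)
  · exact toLex_lt_toLex_comp_swap (hij.lt_of_ne (by rintro rfl; exact hlt.false)) hlt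

/-- For every instance of the adversarial assignment problem there exists an
assignment maximizing the worst-case profit whose coordinates are nonincreasing. -/
theorem decreasing_optimal_assignment (k N α : ℕ) (hα : α ≤ N)
    (t : Fin k → ℝ) (ht_mono : ∀ i j : Fin k, i ≤ j → t j ≤ t i)
    (ht_nonneg : ∀ i, 0 ≤ t i) :
    ∃ x' : Fin k → ℕ, (∑ i, x' i ≤ N) ∧
      (∀ i j : Fin k, i ≤ j → x' j ≤ x' i) ∧
      (∀ x : Fin k → ℕ, (∑ i, x i ≤ N) → worstProfit t α x ≤ worstProfit t α x') :=
  decreasing_optimal_assignment_general k N α t ht_mono ht_nonneg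
end

section
/- Let p ∈ (0,1) and let t_1, …, t_k > 0. Suppose x ∈ ℤ_{≥0}^k satisfies Σ_{i=1}^k x_i = N and the exchange-optimality condition: for all indices i, j with x_i ≥ 1, one has t_i · p^{x_i − 1} ≥ t_j · p^{x_j}. Then x maximizes the expected profit f(x) = Σ_{i=1}^k t_i (1 − p^{x_i}) over all assignments y ∈ ℤ_{≥0}^k with Σ_{i=1}^k y_i ≤ N. (This is the correctness of the greedy algorithm for the stochastic problem: any greedily built assignment satisfies this condition.) -/
/-- Expected total profit of an integer assignment `x` when each agent fails
independently with probability `p`: `f(x) = Σ_i t_i (1 − p^{x_i})`. -/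
noncomputable def expProfit {k : ℕ} (p : ℝ) (t : Fin k → ℝ) (x : Fin k → ℕ) : ℝ :=
  ∑ i, t i * (1 - p ^ (x i))

lemma pow_sub_pow_eq (p : ℝ) {a b : ℕ} (h : a ≤ b) :
    p ^ a - p ^ b = (1 - p) * ∑ m ∈ Finset.Ico a b, p ^ m := by
  induction b, h using Nat.le_induction with
  | base => simp
  | succ b hab ih =>
    rw [Finset.sum_Ico_succ_top hab, mul_add, ← ih]
    ring

/-- Correctness of the greedy algorithm for the stochastic problem:
if `x` uses all `N` agents and satisfies the exchange-optimality condition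
(`t_i p^{x_i − 1} ≥ t_j p^{x_j}` whenever `x_i ≥ 1`), then `x` maximizes the
expected profit over all assignments with at most `N` agents. -/
theorem greedy_optimal (k N : ℕ) (p : ℝ) (hp0 : 0 < p) (hp1 : p < 1)
    (t : Fin k → ℝ) (ht : ∀ i, 0 < t i)
    (x : Fin k → ℕ) (hsum : ∑ i, x i = N)
    (hexch : ∀ i j : Fin k, 1 ≤ x i → t j * p ^ (x j) ≤ t i * p ^ (x i - 1)) :
    ∀ y : Fin k → ℕ, (∑ i, y i ≤ N) → expProfit p t y ≤ expProfit p t x := by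
  intro y hy
  by_cases hN : ∃ i0 : Fin k, 1 ≤ x i0
  · obtain ⟨i0, hi0⟩ := hN
    obtain ⟨m, hm, hmin⟩ := Finset.exists_min_image
      (Finset.univ.filter fun i => 1 ≤ x i)
      (fun i => t i * p ^ (x i - 1)) ⟨i0, by simp [hi0]⟩
    set c := t m * p ^ (x m - 1) with hc
    have hmx : 1 ≤ x m := (Finset.mem_filter.mp hm).2
    have hc1 : ∀ i, t i * p ^ (x i) ≤ c := fun i => hexch m i hmx
    have hc2 : ∀ i, 1 ≤ x i → c ≤ t i * p ^ (x i - 1) := fun i hi =>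
      hmin i (by simp [hi])
    have hcpos : 0 < c := lt_of_lt_of_le (mul_pos (ht i0) (pow_pos hp0 _)) (hc1 i0)
    have key : ∀ i, t i * (1 - p ^ (y i)) - t i * (1 - p ^ (x i))
        ≤ (1 - p) * c * ((y i : ℝ) - (x i : ℝ)) := by
      intro i
      have hE : t i * (1 - p ^ (y i)) - t i * (1 - p ^ (x i))
          = t i * (p ^ (x i) - p ^ (y i)) := by ring
      rw [hE]
      rcases le_or_gt (x i) (y i) with h | h
      · rw [pow_sub_pow_eq p h]
        have hbound : ∑ j ∈ Finset.Ico (x i) (y i), t i * p ^ j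
            ≤ (Finset.Ico (x i) (y i)).card • c := by
          apply Finset.sum_le_card_nsmul
          intro j hj
          have hj' : x i ≤ j := (Finset.mem_Ico.mp hj).1
          calc t i * p ^ j ≤ t i * p ^ (x i) := by
                apply mul_le_mul_of_nonneg_left _ (ht i).le
                exact pow_le_pow_of_le_one hp0.le hp1.le hj'
            _ ≤ c := hc1 i
        have hcard : ((Finset.Ico (x i) (y i)).card • c : ℝ)
            = ((y i : ℝ) - (x i : ℝ)) * c := by
          rw [Nat.card_Ico, nsmul_eq_mul, Nat.cast_sub h]
        have : t i * ((1 - p) * ∑ j ∈ Finset.Ico (x i) (y i), p ^ j)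
            = (1 - p) * ∑ j ∈ Finset.Ico (x i) (y i), t i * p ^ j :=
          calc t i * ((1 - p) * ∑ j ∈ Finset.Ico (x i) (y i), p ^ j)
              = (1 - p) * (t i * ∑ j ∈ Finset.Ico (x i) (y i), p ^ j) := by ring
            _ = (1 - p) * ∑ j ∈ Finset.Ico (x i) (y i), t i * p ^ j := by
                rw [Finset.mul_sum]
        rw [this]
        calc (1 - p) * ∑ j ∈ Finset.Ico (x i) (y i), t i * p ^ j
            ≤ (1 - p) * (((y i : ℝ) - (x i : ℝ)) * c) := by
              apply mul_le_mul_of_nonneg_left _ (by linarith)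
              rw [← hcard]; exact hbound
          _ = (1 - p) * c * ((y i : ℝ) - (x i : ℝ)) := by ring
      · have h' : y i ≤ x i := h.le
        have hxi : 1 ≤ x i := lt_of_le_of_lt (Nat.zero_le _) h
        have hE2 : t i * (p ^ (x i) - p ^ (y i))
            = -(t i * ((1 - p) * ∑ j ∈ Finset.Ico (y i) (x i), p ^ j)) := by
          rw [← pow_sub_pow_eq p h']; ring
        rw [hE2]
        have hbound : (Finset.Ico (y i) (x i)).card • c
            ≤ ∑ j ∈ Finset.Ico (y i) (x i), t i * p ^ j := by
          apply Finset.card_nsmul_le_sum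
          intro j hj
          have hj' : j < x i := (Finset.mem_Ico.mp hj).2
          have hj'' : j ≤ x i - 1 := Nat.le_sub_one_of_lt hj'
          calc c ≤ t i * p ^ (x i - 1) := hc2 i hxi
            _ ≤ t i * p ^ j := by
                apply mul_le_mul_of_nonneg_left _ (ht i).le
                exact pow_le_pow_of_le_one hp0.le hp1.le hj''
        have hcard : ((Finset.Ico (y i) (x i)).card • c : ℝ)
            = ((x i : ℝ) - (y i : ℝ)) * c := by
          rw [Nat.card_Ico, nsmul_eq_mul, Nat.cast_sub h']
        have hEq : t i * ((1 - p) * ∑ j ∈ Finset.Ico (y i) (x i), p ^ j)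
            = (1 - p) * ∑ j ∈ Finset.Ico (y i) (x i), t i * p ^ j :=
          calc t i * ((1 - p) * ∑ j ∈ Finset.Ico (y i) (x i), p ^ j)
              = (1 - p) * (t i * ∑ j ∈ Finset.Ico (y i) (x i), p ^ j) := by ring
            _ = (1 - p) * ∑ j ∈ Finset.Ico (y i) (x i), t i * p ^ j := by
                rw [Finset.mul_sum]
        rw [hEq]
        have : (1 - p) * (((x i : ℝ) - (y i : ℝ)) * c)
            ≤ (1 - p) * ∑ j ∈ Finset.Ico (y i) (x i), t i * p ^ j := by
          apply mul_le_mul_of_nonneg_left _ (by linarith)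
          rw [← hcard]; exact hbound
        nlinarith [this]
    have hsums : (∑ i, (y i : ℝ)) ≤ ∑ i, (x i : ℝ) := by
      have : (∑ i, y i : ℕ) ≤ ∑ i, x i := by omega
      exact_mod_cast (by push_cast; exact_mod_cast this : (∑ i, (y i:ℝ)) ≤ ∑ i, (x i:ℝ))
    have hstep : expProfit p t y - expProfit p t x
        ≤ (1 - p) * c * ((∑ i, (y i : ℝ)) - ∑ i, (x i : ℝ)) := by
      unfold expProfit
      rw [← Finset.sum_sub_distrib]
      calc ∑ i, (t i * (1 - p ^ (y i)) - t i * (1 - p ^ (x i)))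
          ≤ ∑ i, (1 - p) * c * ((y i : ℝ) - (x i : ℝ)) :=
            Finset.sum_le_sum fun i _ => key i
        _ = (1 - p) * c * ((∑ i, (y i : ℝ)) - ∑ i, (x i : ℝ)) := by
            rw [← Finset.mul_sum, Finset.sum_sub_distrib]
    have hfac : 0 ≤ (1 - p) * c := mul_nonneg (by linarith) hcpos.le
    have hfin : (1 - p) * c * ((∑ i, (y i : ℝ)) - ∑ i, (x i : ℝ)) ≤ 0 :=
      mul_nonpos_of_nonneg_of_nonpos hfac (by linarith)
    linarith
  · push_neg at hN
    have hx0 : ∀ i, x i = 0 := fun i => by have := hN i; omega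
    have hN0 : N = 0 := by rw [← hsum]; simp [hx0]
    have hy0 : ∀ i, y i = 0 := by
      intro i
      have : ∑ i, y i = 0 := by omega
      have := Finset.sum_eq_zero_iff.mp this
      exact this i (Finset.mem_univ i)
    unfold expProfit
    simp [hx0, hy0]
end

section
/- Let p ∈ (0,1), let t_1, …, t_k > 0, and let N ≥ 0 be a real number. Define Z = (1/k)(Σ_{i=1}^k log_p(t_i) + N) and x*_i = Z − log_p(t_i) for 1 ≤ i ≤ k (so that Σ_{i=1}^k x*_i = N). If x*_i ≥ 0 for every i, then x* maximizes the function f(x) = Σ_{i=1}^k t_i (1 − p^{x_i}) over the set {x ∈ ℝ^k : x_i ≥ 0 for all i and Σ_{i=1}^k x_i = N}. -/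
/-- Objective of the continuous relaxation of the stochastic assignment problem:
`f(x) = Σ_i t_i (1 − p^{x_i})`, with real exponents. -/
noncomputable def expProfitReal {k : ℕ} (p : ℝ) (t : Fin k → ℝ) (x : Fin k → ℝ) : ℝ :=
  ∑ i, t i * (1 - p ^ (x i))

/-- The Lagrange-multiplier solution `x*_i = Z − log_p(t_i)` with
`Z = (1/k)(Σ_i log_p(t_i) + N)` maximizes the continuous relaxation objective
over nonnegative vectors summing to `N`, provided all its coordinates are
nonnegative. -/
theorem lagrange_solution_optimal (k : ℕ) (hk : 0 < k)
    (p : ℝ) (hp0 : 0 < p) (hp1 : p < 1)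
    (t : Fin k → ℝ) (ht : ∀ i, 0 < t i) (N : ℝ) (hN : 0 ≤ N)
    (Z : ℝ) (hZ : Z = (1 / (k : ℝ)) * (∑ i, Real.logb p (t i) + N))
    (xstar : Fin k → ℝ) (hxstar : ∀ i, xstar i = Z - Real.logb p (t i))
    (hnonneg : ∀ i, 0 ≤ xstar i) :
    ∀ x : Fin k → ℝ, (∀ i, 0 ≤ x i) → (∑ i, x i = N) →
      expProfitReal p t x ≤ expProfitReal p t xstar := by
  intro x hx hsum
  have hkR : (0 : ℝ) < (k : ℝ) := by exact_mod_cast hk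
  have hp1' : p ≠ 1 := ne_of_lt hp1
  -- p ^ (xstar i) = p ^ Z / t i
  have hstar : ∀ i, t i * p ^ (xstar i) = p ^ Z := by
    intro i
    rw [hxstar i, Real.rpow_sub hp0, Real.rpow_logb hp0 hp1' (ht i)]
    rw [mul_comm, div_mul_cancel₀ _ (ht i).ne']
  -- p ^ Z = ((∏ t i) * p ^ N) ^ (1/k)
  have hpZ : p ^ Z = ((∏ i, t i) * p ^ N) ^ ((k : ℝ)⁻¹) := by
    have h1 : p ^ (∑ i, Real.logb p (t i)) = ∏ i, t i := by
      rw [Real.rpow_sum_of_pos hp0]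
      exact Finset.prod_congr rfl fun i _ => Real.rpow_logb hp0 hp1' (ht i)
    rw [hZ, one_div, mul_comm ((k : ℝ)⁻¹) _, Real.rpow_mul hp0.le,
      Real.rpow_add hp0, h1]
  -- AM-GM
  have hz : ∀ i ∈ Finset.univ, (0 : ℝ) ≤ t i * p ^ (x i) := fun i _ =>
    mul_nonneg (ht i).le (Real.rpow_nonneg hp0.le _)
  have hw : ∀ i ∈ (Finset.univ : Finset (Fin k)), (0 : ℝ) ≤ (k : ℝ)⁻¹ :=
    fun _ _ => by positivity
  have hw1 : ∑ _i : Fin k, (k : ℝ)⁻¹ = 1 := by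
    simp [Finset.sum_const]
    field_simp
  have hamgm := Real.geom_mean_le_arith_mean_weighted Finset.univ
    (fun _ => (k : ℝ)⁻¹) (fun i => t i * p ^ (x i)) hw hw1 hz
  -- compute the geometric mean
  have hprod : (∏ i, (t i * p ^ (x i)) ^ ((k : ℝ)⁻¹)) = p ^ Z := by
    rw [Real.finset_prod_rpow _ _ hz, Finset.prod_mul_distrib,
      ← Real.rpow_sum_of_pos hp0, hsum, hpZ]
  rw [hprod] at hamgm
  -- so k * p^Z ≤ ∑ t i * p ^ (x i)
  have hkey : (k : ℝ) * p ^ Z ≤ ∑ i, t i * p ^ (x i) := by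
    have h2 : ∑ i, (k : ℝ)⁻¹ * (t i * p ^ (x i)) = (k : ℝ)⁻¹ * ∑ i, t i * p ^ (x i) := by
      rw [Finset.mul_sum]
    rw [h2] at hamgm
    calc (k : ℝ) * p ^ Z ≤ (k : ℝ) * ((k : ℝ)⁻¹ * ∑ i, t i * p ^ (x i)) :=
          mul_le_mul_of_nonneg_left hamgm hkR.le
      _ = ∑ i, t i * p ^ (x i) := by field_simp
  -- conclude
  unfold expProfitReal
  have e1 : ∀ y : Fin k → ℝ, ∑ i, t i * (1 - p ^ (y i)) = (∑ i, t i) - ∑ i, t i * p ^ (y i) := by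
    intro y
    rw [← Finset.sum_sub_distrib]
    exact Finset.sum_congr rfl fun i _ => by ring
  rw [e1, e1]
  have e2 : ∑ i, t i * p ^ (xstar i) = (k : ℝ) * p ^ Z := by
    rw [Finset.sum_congr rfl fun i _ => hstar i]
    simp [Finset.sum_const, mul_comm]
  rw [e2]
  linarith
end

section
/- Let t_1, …, t_k ≥ 0 and let x ∈ ℤ_{≥0}^k be any assignment. Then there exists an attack δ* ∈ Δ_α(x) attaining the minimum of Σ_{i=1}^k t_i · H(x_i − δ_i) over δ ∈ Δ_α(x) such that for every index i, either δ*_i = 0 or δ*_i = x_i. (An optimal attacker only gains by targeting all agents assigned to a given task.) -/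
/-- There is an optimal attack (minimizing the remaining profit
`Σ_i t_i · H(x_i − δ_i)` over `Δ_α(x)`) that, for each task, disables either
none or all of the agents assigned to it. -/
theorem optimal_attack_all_or_nothing (k α : ℕ) (t : Fin k → ℝ)
    (ht : ∀ i, 0 ≤ t i) (x : Fin k → ℕ) :
    ∃ δstar : Fin k → ℕ,
      (∑ i, δstar i ≤ α) ∧ (∀ i, δstar i ≤ x i) ∧
      (∀ δ : Fin k → ℕ, (∑ i, δ i ≤ α) → (∀ i, δ i ≤ x i) →
        ∑ i, t i * H (x i - δstar i) ≤ ∑ i, t i * H (x i - δ i)) ∧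
      (∀ i, δstar i = 0 ∨ δstar i = x i) := by
  classical
  set g : Finset (Fin k) → ℝ := fun S => ∑ i, t i * H (if i ∈ S then 0 else x i) with hg
  set F : Finset (Finset (Fin k)) :=
    Finset.univ.filter (fun S : Finset (Fin k) => ∑ i ∈ S, x i ≤ α) with hF
  have hne : F.Nonempty := ⟨∅, by simp [hF]⟩
  obtain ⟨S0, hS0F, hS0min⟩ := F.exists_min_image g hne
  have hS0α : ∑ i ∈ S0, x i ≤ α := by
    simpa [hF] using hS0F
  refine ⟨fun i => if i ∈ S0 then x i else 0, ?_, ?_, ?_, ?_⟩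
  · calc ∑ i, (if i ∈ S0 then x i else 0)
        = ∑ i ∈ S0, x i := by
          rw [← Finset.sum_filter]
          congr 1
          ext i; simp
      _ ≤ α := hS0α
  · intro i; by_cases h : i ∈ S0 <;> simp [h]
  · intro δ hδα hδx
    set S : Finset (Fin k) := Finset.univ.filter (fun i => δ i = x i) with hS
    have hSF : S ∈ F := by
      simp only [hF, Finset.mem_filter, Finset.mem_univ, true_and]
      calc ∑ i ∈ S, x i = ∑ i ∈ S, δ i := by
            apply Finset.sum_congr rfl
            intro i hi
            simp only [hS, Finset.mem_filter] at hi
            exact hi.2.symm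
        _ ≤ ∑ i, δ i := Finset.sum_le_sum_of_subset (Finset.subset_univ S)
        _ ≤ α := hδα
    have h1 : ∑ i, t i * H (x i - (if i ∈ S0 then x i else 0)) = g S0 := by
      apply Finset.sum_congr rfl
      intro i _
      by_cases h : i ∈ S0 <;> simp [hg, h]
    have h2 : g S = ∑ i, t i * H (x i - δ i) := by
      apply Finset.sum_congr rfl
      intro i _
      by_cases h : i ∈ S
      · have : δ i = x i := by simpa [hS] using h
        simp [hg, h, this]
      · have hne' : δ i ≠ x i := by simpa [hS] using h
        have hlt : δ i < x i := lt_of_le_of_ne (hδx i) hne'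
        have hx1 : (1 : ℕ) ≤ x i := Nat.one_le_iff_ne_zero.mpr (by omega)
        have hd1 : (1 : ℕ) ≤ x i - δ i := by omega
        have hH1 : H (x i) = 1 := by
          simp [H, min_eq_left]
          exact_mod_cast hx1
        have hH2 : H (x i - δ i) = 1 := by
          simp [H, min_eq_left]
          exact_mod_cast hd1
        simp [hg, h, hH1, hH2]
    rw [h1, ← h2]
    exact hS0min S hSF
  · intro i; by_cases h : i ∈ S0 <;> simp [h]
end

section
/- Let t_1, …, t_k ≥ 0, let α ∈ ℤ_{≥0}, and let x ∈ ℤ_{≥0}^k. Then the worst-case profit satisfies min_{δ ∈ Δ_α(x)} Σ_{i=1}^k t_i · H(x_i − δ_i) = Σ_{i : x_i ≥ 1} t_i − max{ Σ_{i ∈ S} t_i : S ⊆ {i : x_i ≥ 1} and Σ_{i ∈ S} x_i ≤ α }. (The attacker's problem is exactly a 0-1 knapsack with knapsack capacity α, item weights x_i, and item values t_i.) -/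
lemma key_sum {k : ℕ} (t : Fin k → ℝ) (x δ : Fin k → ℕ) (hδ : ∀ i, δ i ≤ x i) :
    ∑ i, t i * H (x i - δ i) =
      (∑ i ∈ Finset.univ.filter (fun i : Fin k => 1 ≤ x i), t i)
      - ∑ i ∈ Finset.univ.filter (fun i : Fin k => 1 ≤ x i ∧ x i ≤ δ i), t i := by
  classical
  have h1 : ∑ i, t i * H (x i - δ i)
      = ∑ i ∈ Finset.univ.filter (fun i : Fin k => 1 ≤ x i ∧ ¬ x i ≤ δ i), t i := by
    rw [Finset.sum_filter]
    refine Finset.sum_congr rfl fun i _ => ?_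
    rcases lt_or_ge (δ i) (x i) with h | h
    · have h1 : 1 ≤ x i - δ i := by omega
      have hH : H (x i - δ i) = 1 := by
        unfold H
        have : (1:ℝ) ≤ ((x i - δ i : ℕ) : ℝ) := by exact_mod_cast h1
        simp [min_eq_left this]
      rw [hH]
      have hc : 1 ≤ x i ∧ ¬ x i ≤ δ i := ⟨by omega, by omega⟩
      simp [hc]
    · have hx : x i - δ i = 0 := by omega
      have hc : ¬ (1 ≤ x i ∧ ¬ x i ≤ δ i) := by omega
      rw [hx, if_neg hc]
      simp [H]
  have h2 : (∑ i ∈ Finset.univ.filter (fun i : Fin k => 1 ≤ x i ∧ x i ≤ δ i), t i)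
      + (∑ i ∈ Finset.univ.filter (fun i : Fin k => 1 ≤ x i ∧ ¬ x i ≤ δ i), t i)
      = ∑ i ∈ Finset.univ.filter (fun i : Fin k => 1 ≤ x i), t i := by
    rw [← Finset.filter_filter, ← Finset.filter_filter,
      Finset.sum_filter_add_sum_filter_not]
  linarith

/-- The attacker's problem is exactly a 0-1 knapsack: the worst-case profit of
`x` equals the total profit of the attempted tasks minus the maximum value of a
subset `S` of attempted tasks whose assigned agents total at most `α`
(knapsack capacity `α`, weights `x_i`, values `t_i`). -/
theorem worstProfit_eq_knapsack (k α : ℕ) (t : Fin k → ℝ)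
    (ht : ∀ i, 0 ≤ t i) (x : Fin k → ℕ) :
    worstProfit t α x =
      (∑ i ∈ Finset.univ.filter (fun i : Fin k => 1 ≤ x i), t i) -
      ((Finset.univ.filter (fun i : Fin k => 1 ≤ x i)).powerset.filter
          (fun S => ∑ i ∈ S, x i ≤ α)).sup'
        ⟨∅, Finset.mem_filter.mpr ⟨Finset.empty_mem_powerset _, by simp⟩⟩
        (fun S => ∑ i ∈ S, t i) := by
  classical
  unfold worstProfit
  apply le_antisymm
  · obtain ⟨S, hS, hSeq⟩ := Finset.exists_mem_eq_sup'
      (⟨∅, Finset.mem_filter.mpr ⟨Finset.empty_mem_powerset _, by simp⟩⟩ :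
        ((Finset.univ.filter (fun i : Fin k => 1 ≤ x i)).powerset.filter
          (fun S => ∑ i ∈ S, x i ≤ α)).Nonempty)
      (fun S => ∑ i ∈ S, t i)
    rw [hSeq]
    have hmem := Finset.mem_filter.mp hS
    have hSA : S ⊆ Finset.univ.filter (fun i : Fin k => 1 ≤ x i) :=
      Finset.mem_powerset.mp hmem.1
    set δ : Fin k → ℕ := fun i => if i ∈ S then x i else 0 with hδdef
    have hδle : ∀ i, δ i ≤ x i := fun i => by
      by_cases h : i ∈ S <;> simp [hδdef, h]
    have hsum : ∑ i, δ i = ∑ i ∈ S, x i := by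
      simp [hδdef, Finset.sum_ite_mem]
    have hδmem : δ ∈ (Finset.Icc 0 x).filter (fun δ => ∑ i, δ i ≤ α) :=
      Finset.mem_filter.mpr ⟨Finset.mem_Icc.mpr ⟨fun i => Nat.zero_le _, hδle⟩,
        by rw [hsum]; exact hmem.2⟩
    refine le_trans (Finset.inf'_le _ hδmem) ?_
    rw [key_sum t x δ hδle]
    have hSδ : Finset.univ.filter (fun i : Fin k => 1 ≤ x i ∧ x i ≤ δ i) = S := by
      ext i
      by_cases h : i ∈ S
      · have : 1 ≤ x i := (Finset.mem_filter.mp (hSA h)).2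
        simp [hδdef, h, this]
      · simp [hδdef, h]
        omega
    rw [hSδ]
  · apply Finset.le_inf'
    intro δ hδ
    have hmem := Finset.mem_filter.mp hδ
    have hδle : ∀ i, δ i ≤ x i := (Finset.mem_Icc.mp hmem.1).2
    rw [key_sum t x δ hδle]
    apply sub_le_sub_left
    have hmem2 : (Finset.univ.filter (fun i : Fin k => 1 ≤ x i ∧ x i ≤ δ i)) ∈
        ((Finset.univ.filter (fun i : Fin k => 1 ≤ x i)).powerset.filter
          (fun S => ∑ i ∈ S, x i ≤ α)) := by
      refine Finset.mem_filter.mpr ⟨Finset.mem_powerset.mpr ?_, ?_⟩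
      · intro i hi
        simp only [Finset.mem_filter, Finset.mem_univ, true_and] at hi ⊢
        exact hi.1
      · calc ∑ i ∈ Finset.univ.filter (fun i : Fin k => 1 ≤ x i ∧ x i ≤ δ i), x i
            ≤ ∑ i ∈ Finset.univ.filter (fun i : Fin k => 1 ≤ x i ∧ x i ≤ δ i), δ i := by
              apply Finset.sum_le_sum
              intro i hi
              exact (Finset.mem_filter.mp hi).2.2
          _ ≤ ∑ i, δ i := Finset.sum_le_sum_of_subset (Finset.filter_subset _ _)
          _ ≤ α := hmem.2
    exact Finset.le_sup' (fun S => ∑ i ∈ S, t i) hmem2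
end

section
/- Let t_1 ≥ t_2 ≥ ⋯ ≥ t_k ≥ 0, let N, α ∈ ℤ_{≥0} with α ≤ N, let 1 ≤ m ≤ k and c ≥ 1 with c·m ≤ N, and define the assignment x by x_i = c for 1 ≤ i ≤ m and x_i = 0 for m < i ≤ k. Then the worst-case profit of x equals Σ_{i = min(m, ⌊α/c⌋) + 1}^{m} t_i; that is, an optimal attacker disables the ⌊α/c⌋ most valuable of the m attempted tasks (or all of them if ⌊α/c⌋ ≥ m). -/
open Finset

lemma sm_bound {p : ℕ} (g : Fin p → ℕ) (hg : StrictMono g) (a b : Fin p) (h : (a:ℕ) ≤ b) :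
    g a + ((b:ℕ) - a) ≤ g b := by
  suffices H : ∀ d (a b : Fin p), (a:ℕ) + d = (b:ℕ) → g a + d ≤ g b by
    have := H ((b:ℕ) - a) a b (by omega); omega
  intro d
  induction d with
  | zero => intro a b hab; have : a = b := Fin.ext (by omega); simp [this]
  | succ d ih =>
    intro a b hab
    have hb' : (a:ℕ) + d < p := by have := b.isLt; omega
    have h1 := ih a ⟨(a:ℕ)+d, hb'⟩ rfl
    have h2 : g ⟨(a:ℕ)+d, hb'⟩ < g b := hg (by simp [Fin.lt_def]; omega)
    omega

lemma key {k : ℕ} (t : Fin k → ℝ) (ht_mono : ∀ i j : Fin k, i ≤ j → t j ≤ t i)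
    (ht_nonneg : ∀ i, 0 ≤ t i) (m r : ℕ) (S : Finset (Fin k))
    (hS : ∀ i ∈ S, (i:ℕ) < m) (hcard : m - r ≤ S.card) :
    ∑ i ∈ univ.filter (fun i : Fin k => r ≤ (i : ℕ) ∧ (i : ℕ) < m), t i ≤ ∑ i ∈ S, t i := by
  set p := S.card with hp
  set f := S.orderEmbOfFin hp.symm with hf
  have hfmem : ∀ q : Fin p, f q ∈ S := fun q => S.orderEmbOfFin_mem hp.symm q
  have hfsm : StrictMono (fun q : Fin p => ((f q : Fin k) : ℕ)) :=
    fun a b hab => Fin.lt_def.mp (f.strictMono hab)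
  set T := univ.filter (fun i : Fin k => r ≤ (i : ℕ) ∧ (i : ℕ) < m) with hT
  have hq : ∀ j : Fin k, r ≤ (j:ℕ) → (j:ℕ) < m → p - (m - (j:ℕ)) < p := by
    intro j h1 h2; omega
  set φ : Fin k → Fin k := fun j =>
    if h : r ≤ (j:ℕ) ∧ (j:ℕ) < m then f ⟨p - (m - (j:ℕ)), hq j h.1 h.2⟩ else j with hφ
  have hφS : ∀ j ∈ T, φ j ∈ S := by
    intro j hj
    rw [hT, mem_filter] at hj
    simp only [hφ, dif_pos hj.2]
    exact hfmem _
  have hφle : ∀ j ∈ T, (φ j : ℕ) ≤ (j : ℕ) := by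
    intro j hj
    rw [hT, mem_filter] at hj
    obtain ⟨-, h1, h2⟩ := hj
    simp only [hφ, dif_pos (And.intro h1 h2)]
    have hp0 : 0 < p := by omega
    have hb := sm_bound _ hfsm ⟨p - (m - (j:ℕ)), hq j h1 h2⟩ ⟨p - 1, by omega⟩ (by simp; omega)
    have hlast : ((f ⟨p-1, by omega⟩ : Fin k) : ℕ) < m := hS _ (hfmem _)
    simp only at hb
    omega
  have hinj : Set.InjOn φ T := by
    intro a ha b hb hab
    rw [Finset.mem_coe, hT, mem_filter] at ha hb
    obtain ⟨-, ha1, ha2⟩ := ha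
    obtain ⟨-, hb1, hb2⟩ := hb
    simp only [hφ, dif_pos (And.intro ha1 ha2), dif_pos (And.intro hb1 hb2)] at hab
    have h := congrArg Fin.val (f.injective hab)
    simp only [Fin.val_mk] at h
    exact Fin.ext (by omega)
  calc ∑ i ∈ T, t i ≤ ∑ i ∈ T, t (φ i) := by
        apply Finset.sum_le_sum
        intro j hj
        exact ht_mono _ _ (Fin.le_def.mpr (hφle j hj))
    _ = ∑ i ∈ T.image φ, t i := (Finset.sum_image (fun a ha b hb => hinj ha hb)).symm
    _ ≤ ∑ i ∈ S, t i := by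
        apply Finset.sum_le_sum_of_subset_of_nonneg
        · intro i hi
          obtain ⟨j, hj, rfl⟩ := Finset.mem_image.mp hi
          exact hφS j hj
        · intro i _ _; exact ht_nonneg i

lemma card_filter_val_lt (k r : ℕ) (h : r ≤ k) :
    (univ.filter (fun i : Fin k => (i:ℕ) < r)).card = r := by
  rw [Finset.card_filter]
  rw [Fin.sum_univ_eq_sum_range (fun j => if j < r then 1 else 0)]
  rw [← Finset.card_filter]
  have : filter (fun i => i < r) (range k) = range r := by
    ext j; simp [Finset.mem_range]; omega
  rw [this, Finset.card_range]

/-- If `c` agents are assigned to each of the `m` most valuable tasks, the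
worst-case profit is `Σ_{i = min(m, ⌊α/c⌋) + 1}^{m} t_i`: an optimal attacker
disables the `⌊α/c⌋` most valuable attempted tasks (or all `m` of them if
`⌊α/c⌋ ≥ m`). Indices in the sum below are 0-based, so the sum runs over
`min(m, ⌊α/c⌋) ≤ i < m`. -/
theorem uniform_assignment_worstProfit (k N α m c : ℕ) (hα : α ≤ N)
    (t : Fin k → ℝ) (ht_mono : ∀ i j : Fin k, i ≤ j → t j ≤ t i)
    (ht_nonneg : ∀ i, 0 ≤ t i)
    (hm1 : 1 ≤ m) (hmk : m ≤ k) (hc : 1 ≤ c) (hcm : c * m ≤ N)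
    (x : Fin k → ℕ) (hx : ∀ i : Fin k, x i = if (i : ℕ) < m then c else 0) :
    worstProfit t α x =
      ∑ i ∈ Finset.univ.filter
          (fun i : Fin k => min m (α / c) ≤ (i : ℕ) ∧ (i : ℕ) < m), t i := by
  have H0 : H 0 = 0 := by simp [H]
  have H1 : ∀ n, 1 ≤ n → H n = 1 := by
    intro n hn
    have : (1:ℝ) ≤ (n:ℝ) := by exact_mod_cast hn
    simp [H, min_eq_left this]
  set r := min m (α / c) with hrdef
  have hrm : r ≤ m := min_le_left _ _
  apply le_antisymm
  · -- upper bound: take δ* killing the first r tasks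
    set δstar : Fin k → ℕ := fun i => if (i:ℕ) < r then c else 0 with hδs
    have hmem : δstar ∈ (Finset.Icc 0 x).filter (fun δ => ∑ i, δ i ≤ α) := by
      rw [Finset.mem_filter, Finset.mem_Icc]
      refine ⟨⟨fun i => Nat.zero_le _, fun i => ?_⟩, ?_⟩
      · simp only [hδs, hx i]
        split_ifs with h1 h2 <;> omega
      · have hsum : ∑ i, δstar i = c * r := by
          simp only [hδs]
          rw [← Finset.sum_filter, Finset.sum_const, card_filter_val_lt k r (le_trans hrm hmk),
            smul_eq_mul, mul_comm]
        rw [hsum]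
        have h1 : r ≤ α / c := min_le_right _ _
        have h2 : c * (α / c) ≤ α := Nat.mul_div_le α c
        calc c * r ≤ c * (α / c) := Nat.mul_le_mul_left c h1
          _ ≤ α := h2
    refine le_trans (Finset.inf'_le _ hmem) (le_of_eq ?_)
    rw [Finset.sum_filter]
    apply Finset.sum_congr rfl
    intro i _
    by_cases h1 : (i:ℕ) < m
    · by_cases h2 : (i:ℕ) < r
      · simp only [hδs, hx i, if_pos h1, if_pos h2, Nat.sub_self, H0, mul_zero]
        rw [if_neg (by omega)]
      · simp only [hδs, hx i, if_pos h1, if_neg h2, Nat.sub_zero, H1 c hc, mul_one]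
        rw [if_pos (by omega)]
    · simp only [hδs, hx i, if_neg h1, if_neg (by omega : ¬ (i:ℕ) < r), Nat.sub_self, H0,
        mul_zero]
      rw [if_neg (by omega)]
  · -- lower bound
    apply Finset.le_inf'
    intro δ hδ
    rw [Finset.mem_filter, Finset.mem_Icc] at hδ
    obtain ⟨⟨-, hle⟩, hsum⟩ := hδ
    set S := univ.filter (fun i : Fin k => (i:ℕ) < m ∧ δ i < c) with hS
    have hval : ∑ i, t i * H (x i - δ i) = ∑ i ∈ S, t i := by
      rw [Finset.sum_filter]
      apply Finset.sum_congr rfl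
      intro i _
      by_cases h1 : (i:ℕ) < m
      · have hxi : x i = c := by rw [hx i, if_pos h1]
        by_cases h2 : δ i < c
        · have hh : H (x i - δ i) = 1 := by rw [hxi]; exact H1 _ (by omega)
          rw [hh, mul_one, if_pos ⟨h1, h2⟩]
        · have h3 : δ i = c := by have hd : δ i ≤ x i := hle i; rw [hxi] at hd; omega
          rw [hxi, h3, Nat.sub_self, H0, mul_zero, if_neg (by omega)]
      · have hxi : x i = 0 := by rw [hx i, if_neg h1]
        have h3 : δ i = 0 := by have hd : δ i ≤ x i := hle i; omega
        rw [hxi, h3, Nat.sub_self, H0, mul_zero, if_neg (by omega)]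
    rw [hval]
    apply key t ht_mono ht_nonneg m r S (fun i hi => ((Finset.mem_filter.mp hi).2).1)
    -- cardinality bound
    set K := univ.filter (fun i : Fin k => (i:ℕ) < m ∧ ¬ δ i < c) with hK
    have hsplit : S.card + K.card = m := by
      have h1 : S = (univ.filter (fun i : Fin k => (i:ℕ) < m)).filter (fun i => δ i < c) := by
        rw [Finset.filter_filter]
      have h2 : K = (univ.filter (fun i : Fin k => (i:ℕ) < m)).filter (fun i => ¬ δ i < c) := by
        rw [Finset.filter_filter]
      rw [h1, h2, Finset.card_filter_add_card_filter_not, card_filter_val_lt k m hmk]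
    have hKsum : c * K.card ≤ α := by
      have h1 : ∀ i ∈ K, δ i = c := by
        intro i hi
        rw [hK, Finset.mem_filter] at hi
        have hd : δ i ≤ x i := hle i
        rw [hx i, if_pos hi.2.1] at hd
        omega
      calc c * K.card = ∑ i ∈ K, δ i := by
            rw [Finset.sum_congr rfl h1, Finset.sum_const, smul_eq_mul, mul_comm]
        _ ≤ ∑ i, δ i := Finset.sum_le_sum_of_subset (Finset.subset_univ K)
        _ ≤ α := hsum
    have hKr : K.card ≤ r := by
      have h1 : K.card ≤ α / c :=
        (Nat.le_div_iff_mul_le (by omega)).mpr (by rw [Nat.mul_comm]; exact hKsum)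
      omega
    omega
end

section
/- Let p ∈ (0,1), let t_1 ≥ t_2 ≥ ⋯ ≥ t_k > 0, and let N ≥ 0 be real. Define Z = (1/k)(Σ_{i=1}^k log_p(t_i) + N). If Z − log_p(t_k) < 0 (i.e., the Lagrange formula assigns a negative number of agents to the least valuable task), then every maximizer x of f(x) = Σ_{i=1}^k t_i (1 − p^{x_i}) over the set {x ∈ ℝ^k : x_i ≥ 0 for all i, Σ_{i=1}^k x_i = N} satisfies x_k = 0. -/
/-- If the Lagrange formula `x_i = Z − log_p(t_i)` assigns a negative value to
the least valuable task (index `k`), then every maximizer of the continuous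
relaxation over nonnegative vectors summing to `N` assigns `0` to that task. -/
theorem negative_lagrange_zero_at_last (k : ℕ) (hk : 0 < k)
    (p : ℝ) (hp0 : 0 < p) (hp1 : p < 1)
    (t : Fin k → ℝ) (ht : ∀ i, 0 < t i)
    (ht_mono : ∀ i j : Fin k, i ≤ j → t j ≤ t i)
    (N : ℝ) (hN : 0 ≤ N)
    (Z : ℝ) (hZ : Z = (1 / (k : ℝ)) * (∑ i, Real.logb p (t i) + N))
    (hneg : Z - Real.logb p (t ⟨k - 1, by omega⟩) < 0) :
    ∀ x : Fin k → ℝ, (∀ i, 0 ≤ x i) → (∑ i, x i = N) →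
      (∀ y : Fin k → ℝ, (∀ i, 0 ≤ y i) → (∑ i, y i = N) →
        expProfitReal p t y ≤ expProfitReal p t x) →
      x ⟨k - 1, by omega⟩ = 0 := by
  intro x hx hsum hmax
  set j : Fin k := ⟨k - 1, by omega⟩ with hjdef
  by_contra hxj
  have hxj' : 0 < x j := lt_of_le_of_ne (hx j) (Ne.symm hxj)
  have hlogp : Real.log p < 0 := Real.log_neg hp0 hp1
  have hpow_pos : ∀ z : ℝ, 0 < p ^ z := fun z => Real.rpow_pos_of_pos hp0 z
  -- Step 1: there is an index with strictly larger marginal value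
  have hex : ∃ i : Fin k, t j * p ^ (x j) < t i * p ^ (x i) := by
    by_contra h
    push_neg at h
    have hkey : ∀ i, Real.logb p (t j) + x j ≤ Real.logb p (t i) + x i := by
      intro i
      have h1 : Real.log (t i * p ^ (x i)) ≤ Real.log (t j * p ^ (x j)) :=
        Real.log_le_log (mul_pos (ht i) (hpow_pos _)) (h i)
      rw [Real.log_mul (ht i).ne' (hpow_pos _).ne',
          Real.log_mul (ht j).ne' (hpow_pos _).ne',
          Real.log_rpow hp0, Real.log_rpow hp0] at h1
      have h2 : (Real.log (t j) + x j * Real.log p) / Real.log p ≤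
          (Real.log (t i) + x i * Real.log p) / Real.log p :=
        div_le_div_of_nonpos_of_le hlogp.le h1
      rw [add_div, add_div, mul_div_cancel_right₀ _ hlogp.ne,
          mul_div_cancel_right₀ _ hlogp.ne] at h2
      simpa [Real.logb] using h2
    have hsum2 : (k : ℝ) * Real.logb p (t j) + (k : ℝ) * x j ≤
        ∑ i, (Real.logb p (t i) + x i) := by
      have := Finset.card_nsmul_le_sum Finset.univ
        (fun i => Real.logb p (t i) + x i) (Real.logb p (t j) + x j)
        (fun i _ => hkey i)
      simpa [nsmul_eq_mul] using this
    rw [Finset.sum_add_distrib, hsum] at hsum2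
    have hk' : (0 : ℝ) < (k : ℝ) := by exact_mod_cast hk
    have hZ' : Real.logb p (t j) + x j ≤ Z := by
      rw [hZ]
      rw [one_div, inv_mul_eq_div, le_div_iff₀ hk']
      nlinarith [hsum2]
    have : Z - Real.logb p (t j) > 0 := by linarith
    linarith
  obtain ⟨i, hst⟩ := hex
  have hij : i ≠ j := by
    intro hij; rw [hij] at hst; exact lt_irrefl _ hst
  set A := t i * p ^ (x i) with hA
  set B := t j * p ^ (x j) with hB
  have hApos : 0 < A := mul_pos (ht i) (hpow_pos _)
  have hBpos : 0 < B := mul_pos (ht j) (hpow_pos _)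
  have hr1 : 1 < A / B := (one_lt_div hBpos).mpr hst
  have hlr : 0 < Real.log (A / B) := Real.log_pos hr1
  set ε : ℝ := min (x j) (Real.log (A / B) / (2 * (-Real.log p))) with hεdef
  have hnlp : 0 < -Real.log p := by linarith
  have hε0 : 0 < ε := lt_min hxj' (div_pos hlr (by linarith))
  have hεxj : ε ≤ x j := min_le_left _ _
  -- Key inequality: t j * p ^ (x j - ε) < A
  have hkey2 : t j * p ^ (x j - ε) < A := by
    have h1 : ε * (-Real.log p) < Real.log (A / B) := by
      have := min_le_right (x j) (Real.log (A / B) / (2 * (-Real.log p)))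
      have h2 : ε * (-Real.log p) ≤ Real.log (A / B) / 2 := by
        rw [hεdef]
        calc min (x j) (Real.log (A / B) / (2 * (-Real.log p))) * (-Real.log p)
            ≤ (Real.log (A / B) / (2 * (-Real.log p))) * (-Real.log p) := by
              apply mul_le_mul_of_nonneg_right this (by linarith)
          _ = Real.log (A / B) / 2 := by
              rw [div_mul_eq_mul_div, mul_comm 2 (-Real.log p),
                mul_comm (Real.log (A / B)) (-Real.log p),
                mul_div_mul_left _ _ hnlp.ne']
      linarith
    have h3 : Real.log (p ^ (-ε)) < Real.log (A / B) := by
      rw [Real.log_rpow hp0]; nlinarith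
    have h4 : p ^ (-ε) < A / B :=
      (Real.log_lt_log_iff (hpow_pos _) (div_pos hApos hBpos)).mp h3
    have h5 : p ^ (x j - ε) = p ^ (x j) * p ^ (-ε) := by
      rw [← Real.rpow_add hp0]; ring_nf
    rw [h5, ← mul_assoc]
    calc t j * p ^ (x j) * p ^ (-ε) = B * p ^ (-ε) := by rw [hB]
      _ < B * (A / B) := by exact mul_lt_mul_of_pos_left h4 hBpos
      _ = A := by field_simp
  -- Construct the better point y
  set y : Fin k → ℝ := fun m => if m = i then x i + ε else if m = j then x j - ε else x m
    with hydef
  have hy0 : ∀ m, 0 ≤ y m := by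
    intro m
    rw [hydef]
    by_cases h1 : m = i
    · simp [h1]; linarith [hx i]
    · by_cases h2 : m = j
      · subst h2; simp [Ne.symm hij]; linarith
      · simp [h1, h2]; exact hx m
  have hysum : ∑ m, y m = N := by
    have heq : ∀ m, y m = x m + (if m = i then ε else 0) - (if m = j then ε else 0) := by
      intro m
      rw [hydef]
      by_cases h1 : m = i
      · subst h1; simp [hij]
      · by_cases h2 : m = j
        · subst h2; simp [h1]
        · simp [h1, h2]
    rw [Finset.sum_congr rfl (fun m _ => heq m)]
    simp [Finset.sum_add_distrib, Finset.sum_sub_distrib, Finset.sum_ite_eq', hsum]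
  -- f(y) > f(x)
  have hlt : expProfitReal p t x < expProfitReal p t y := by
    have hdiff : expProfitReal p t y - expProfitReal p t x =
        ∑ m, (t m * (1 - p ^ (y m)) - t m * (1 - p ^ (x m))) := by
      rw [expProfitReal, expProfitReal, ← Finset.sum_sub_distrib]
    have heq : ∀ m : Fin k, t m * (1 - p ^ (y m)) - t m * (1 - p ^ (x m)) =
        (if m = i then t i * (p ^ (x i) - p ^ (x i + ε)) else 0) +
        (if m = j then t j * (p ^ (x j) - p ^ (x j - ε)) else 0) := by
      intro m
      by_cases h1 : m = i
      · subst h1; simp [hydef, hij]; ring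
      · by_cases h2 : m = j
        · subst h2; simp [hydef, h1]; ring
        · simp [hydef, h1, h2]
    have hpε : p ^ ε < 1 := by
      have := Real.rpow_lt_one hp0.le hp1 hε0
      simpa using this
    have hsplit : expProfitReal p t y - expProfitReal p t x =
        t i * (p ^ (x i) - p ^ (x i + ε)) + t j * (p ^ (x j) - p ^ (x j - ε)) := by
      rw [hdiff, Finset.sum_congr rfl (fun m _ => heq m), Finset.sum_add_distrib]
      simp [Finset.sum_ite_eq']
    have hfac : t i * (p ^ (x i) - p ^ (x i + ε)) + t j * (p ^ (x j) - p ^ (x j - ε)) =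
        (1 - p ^ ε) * (A - t j * p ^ (x j - ε)) := by
      have e1 : p ^ (x i + ε) = p ^ (x i) * p ^ ε := Real.rpow_add hp0 _ _
      have e2 : p ^ (x j) = p ^ (x j - ε) * p ^ ε := by
        rw [← Real.rpow_add hp0]; ring_nf
      rw [e1, e2, hA]; ring
    have hpos : 0 < expProfitReal p t y - expProfitReal p t x := by
      rw [hsplit, hfac]
      apply mul_pos (by linarith) (by linarith)
    linarith
  exact absurd (hmax y hy0 hysum) (not_le.mpr hlt)
end

section
/- Let p ∈ (0,1), let t_1, …, t_k > 0, and let N ∈ ℤ_{≥0}. Suppose x* ∈ ℝ^k maximizes f(x) = Σ_{i=1}^k t_i (1 − p^{x_i}) over {x ∈ ℝ^k : x_i ≥ 0 for all i, Σ_{i=1}^k x_i = N}. Then there exists an integer assignment x ∈ ℤ_{≥0}^k with Σ_{i=1}^k x_i = N that maximizes f over all integer assignments with coordinate sum at most N and that satisfies x_i ≥ ⌊x*_i⌋ for every i. (This underlies the correctness of converting the continuous optimum to a discrete one by flooring and then greedily assigning the leftover agents.) -/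
open Finset

def budgetSimplex (k : ℕ) (s : ℝ) : Set (Fin k → ℝ) :=
  {y | (∀ i, 0 ≤ y i) ∧ ∑ i, y i = s}

section Combinatorics

variable {ι : Type*} [Fintype ι] [DecidableEq ι]

lemma exists_le_sum_eq_of_sum_le [Nonempty ι] {y : ι → ℕ} {N : ℕ} (hy : ∑ i, y i ≤ N) :
    ∃ z, y ≤ z ∧ ∑ i, z i = N := by
  refine ⟨y + Pi.single (Classical.arbitrary ι) (N - ∑ i, y i), le_add_of_nonneg_right bot_le, ?_⟩
  simp only [Pi.add_apply, sum_add_distrib, Finset.sum_pi_single', mem_univ, if_true]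
  omega

lemma exists_le_of_transfer_le {α : Type*} [Preorder α] (F : (ι → ℕ) → α) (m : ι → ℕ)
    (htransfer : ∀ (w : ι → ℕ) i j, i ≠ j → m i ≤ w i → w j < m j →
      F (w + Pi.single i 1) ≤ F (w + Pi.single j 1))
    {N : ℕ} (hm : ∑ i, m i ≤ N) (y : ι → ℕ) (hy : ∑ i, y i = N) :
    ∃ z, m ≤ z ∧ ∑ i, z i = N ∧ F y ≤ F z := by
  induction hd : ∑ i, (m i - y i) using Nat.strong_induction_on generalizing y with
  | _ d ih =>
  by_cases hmy : m ≤ y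
  · exact ⟨y, hmy, hy, le_rfl⟩
  obtain ⟨j, hj⟩ : ∃ j, y j < m j := by simpa [Pi.le_def] using hmy
  obtain ⟨i, hi⟩ : ∃ i, m i < y i := by
    by_contra! h
    have : ∑ i, y i < ∑ i, m i := sum_lt_sum (fun i _ => h i) ⟨j, mem_univ j, hj⟩
    omega
  have hij : i ≠ j := by rintro rfl; omega
  obtain ⟨w, rfl⟩ : ∃ w, y = w + Pi.single i 1 :=
    ⟨y - Pi.single i 1, by ext l; by_cases h : l = i <;> simp [h]; omega⟩
  simp only [Pi.add_apply, Pi.single_eq_same, Pi.single_eq_of_ne hij.symm, add_zero] at hi hj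
  have hsum : ∑ l, (w + Pi.single j 1 : ι → ℕ) l = N := by
    simpa only [Pi.add_apply, sum_add_distrib, Finset.sum_pi_single', mem_univ, if_true] using hy
  have hdef : ∑ l, (m l - (w + Pi.single j 1 : ι → ℕ) l) < d := by
    rw [← hd]
    refine sum_lt_sum (fun l _ => ?_) ⟨j, mem_univ j, ?_⟩ <;>
      simp only [Pi.add_apply, Pi.single_apply] <;> split_ifs <;> subst_vars <;> omega
  obtain ⟨z, hmz, hz, hFz⟩ := ih _ hdef _ hsum rfl
  exact ⟨z, hmz, hz, (htransfer w i j hij (by omega) hj).trans hFz⟩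

end Combinatorics

section Profit

variable {k : ℕ} {p : ℝ} {t : Fin k → ℝ}

lemma expProfit_mono (hp0 : 0 ≤ p) (hp1 : p ≤ 1) (ht : ∀ i, 0 ≤ t i) :
    Monotone (expProfit p t) := fun _ _ h =>
  sum_le_sum fun i _ =>
    mul_le_mul_of_nonneg_left (sub_le_sub_left (pow_le_pow_of_le_one hp0 hp1 (h i)) 1) (ht i)

lemma expProfit_add_single (w : Fin k → ℕ) (i : Fin k) :
    expProfit p t (w + Pi.single i 1) = expProfit p t w + t i * p ^ w i * (1 - p) := by
  rw [← sub_eq_iff_eq_add', expProfit, expProfit, ← sum_sub_distrib,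
    Fintype.sum_eq_single i fun l hl => by simp [Pi.single_eq_of_ne hl]]
  simp only [Pi.add_apply, Pi.single_eq_same, pow_succ]
  ring

lemma expProfit_add_single_le_add_single (hp1 : p ≤ 1) {w : Fin k → ℕ} {i j : Fin k}
    (h : t i * p ^ w i ≤ t j * p ^ w j) :
    expProfit p t (w + Pi.single i 1) ≤ expProfit p t (w + Pi.single j 1) := by
  rw [expProfit_add_single, expProfit_add_single]
  gcongr

lemma expProfitReal_add_single (hp0 : 0 < p) (w : Fin k → ℝ) (i : Fin k) (δ : ℝ) :
    expProfitReal p t (w + Pi.single i δ) = expProfitReal p t w + t i * p ^ w i * (1 - p ^ δ) := by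
  rw [← sub_eq_iff_eq_add', expProfitReal, expProfitReal, ← sum_sub_distrib,
    Fintype.sum_eq_single i fun l hl => by simp [Pi.single_eq_of_ne hl]]
  simp only [Pi.add_apply, Pi.single_eq_same, Real.rpow_add hp0]
  ring

variable {s : ℝ} {x : Fin k → ℝ}

lemma mul_rpow_le_of_isMaxOn (hp0 : 0 < p) (hp1 : p < 1)
    (hmax : IsMaxOn (expProfitReal p t) (budgetSimplex k s) x) (hx : x ∈ budgetSimplex k s)
    {i j : Fin k} (hij : i ≠ j) {δ : ℝ} (hδ : 0 < δ) (hδj : δ ≤ x j) :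
    t i * p ^ x i ≤ t j * p ^ (x j - δ) := by
  set w := x - Pi.single j δ
  have hxw : x = w + Pi.single j δ := (sub_add_cancel x _).symm
  have hwi : w i = x i := by simp [w, Pi.single_eq_of_ne hij]
  have hwj : w j = x j - δ := by simp [w]
  have hy : w + Pi.single i δ ∈ budgetSimplex k s := by
    refine ⟨fun l => ?_, ?_⟩
    · by_cases h : l = i
      · subst h; simp only [Pi.add_apply, Pi.single_eq_same, hwi]; linarith [hx.1 l]
      · by_cases h' : l = j
        · subst h'; simp [Pi.single_eq_of_ne h, hwj, hδj]
        · simp [w, Pi.single_eq_of_ne h, Pi.single_eq_of_ne h', hx.1 l]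
    · rw [← hx.2, hxw]
      simp only [Pi.add_apply, sum_add_distrib, Finset.sum_pi_single', mem_univ, if_true]
  have hgain : expProfitReal p t (w + Pi.single i δ) ≤ expProfitReal p t x := hmax hy
  rw [hxw, expProfitReal_add_single hp0, expProfitReal_add_single hp0,
    hwi, hwj] at hgain
  have hpδ : 0 < 1 - p ^ δ := sub_pos.2 (Real.rpow_lt_one hp0.le hp1 hδ)
  nlinarith

lemma mul_pow_le_of_floor_le (hp0 : 0 < p) (hp1 : p < 1) (ht : ∀ i, 0 ≤ t i)
    (hmax : IsMaxOn (expProfitReal p t) (budgetSimplex k s) x) (hx : x ∈ budgetSimplex k s)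
    {i j : Fin k} (hij : i ≠ j) {c b : ℕ} (hc : ⌊x i⌋₊ ≤ c) (hb : b < ⌊x j⌋₊) :
    t i * p ^ c ≤ t j * p ^ b := by
  set δ := ⌊x i⌋₊ + 1 - x i
  have hδ : 0 < δ := sub_pos.2 (Nat.lt_floor_add_one _)
  have hδ1 : δ ≤ 1 := by linarith [Nat.floor_le (hx.1 i)]
  have hxj : (b : ℝ) + 1 ≤ x j := by exact_mod_cast (Nat.le_floor_iff (hx.1 j)).1 hb
  have hanti : ∀ {u v : ℝ}, u ≤ v → p ^ v ≤ p ^ u :=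
    fun h => Real.rpow_le_rpow_of_exponent_ge hp0 hp1.le h
  have hkey := mul_rpow_le_of_isMaxOn hp0 hp1 hmax hx hij hδ (by linarith)
  -- `δ` is chosen so that rescaling by `p ^ (⌊x i⌋₊ - x i)` turns `x j - δ` into `x j - 1`.
  calc t i * p ^ c = t i * p ^ (c : ℝ) := by rw [Real.rpow_natCast]
    _ ≤ t i * p ^ (⌊x i⌋₊ : ℝ) := mul_le_mul_of_nonneg_left (hanti (by exact_mod_cast hc)) (ht i)
    _ = t i * p ^ x i * p ^ (⌊x i⌋₊ - x i) := by rw [mul_assoc, ← Real.rpow_add hp0]; ring_nf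
    _ ≤ t j * p ^ (x j - δ) * p ^ (⌊x i⌋₊ - x i) := by gcongr
    _ = t j * p ^ (x j - 1) := by rw [mul_assoc, ← Real.rpow_add hp0]; congr 2; simp only [δ]; ring
    _ ≤ t j * p ^ (b : ℝ) := mul_le_mul_of_nonneg_left (hanti (by linarith)) (ht j)
    _ = t j * p ^ b := by rw [Real.rpow_natCast]

lemma exists_floor_le_expProfit_le {N : ℕ} (hp0 : 0 < p) (hp1 : p < 1) (ht : ∀ i, 0 ≤ t i)
    (hmax : IsMaxOn (expProfitReal p t) (budgetSimplex k N) x) (hx : x ∈ budgetSimplex k N)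
    {y : Fin k → ℕ} (hy : ∑ i, y i ≤ N) :
    ∃ z : Fin k → ℕ, (∀ i, ⌊x i⌋₊ ≤ z i) ∧ ∑ i, z i = N ∧ expProfit p t y ≤ expProfit p t z := by
  obtain ⟨y', hyy', hy'⟩ : ∃ y', y ≤ y' ∧ ∑ i, y' i = N := by
    cases isEmpty_or_nonempty (Fin k)
    · have hN : (0 : ℝ) = N := by simpa using hx.2
      exact ⟨y, le_rfl, by simpa using (Nat.cast_eq_zero.1 hN.symm).symm⟩
    · exact exists_le_sum_eq_of_sum_le hy
  have hm : ∑ i, ⌊x i⌋₊ ≤ N := by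
    exact_mod_cast (sum_le_sum fun i _ => Nat.floor_le (hx.1 i)).trans_eq hx.2
  obtain ⟨z, hmz, hz, hy'z⟩ := exists_le_of_transfer_le (expProfit p t) (fun i => ⌊x i⌋₊)
    (fun _ _ _ hij hi hj => expProfit_add_single_le_add_single hp1.le
      (mul_pow_le_of_floor_le hp0 hp1 ht hmax hx hij hi hj)) hm y' hy'
  exact ⟨z, hmz, hz, (expProfit_mono hp0.le hp1.le ht hyy').trans hy'z⟩

end Profit

/-- If `x*` maximizes the continuous relaxation over nonnegative real vectors
summing to `N`, then there is an integer assignment using all `N` agents that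
maximizes the expected profit over all integer assignments with at most `N`
agents and dominates the floor of `x*` coordinatewise. -/
theorem floor_then_greedy_correct (k : ℕ) (p : ℝ) (hp0 : 0 < p) (hp1 : p < 1)
    (t : Fin k → ℝ) (ht : ∀ i, 0 < t i) (N : ℕ)
    (xstar : Fin k → ℝ) (hnonneg : ∀ i, 0 ≤ xstar i)
    (hsum : ∑ i, xstar i = N)
    (hmax : ∀ y : Fin k → ℝ, (∀ i, 0 ≤ y i) → (∑ i, y i = N) →
      expProfitReal p t y ≤ expProfitReal p t xstar) :
    ∃ x : Fin k → ℕ, (∑ i, x i = N) ∧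
      (∀ y : Fin k → ℕ, (∑ i, y i ≤ N) → expProfit p t y ≤ expProfit p t x) ∧
      (∀ i, ⌊xstar i⌋ ≤ (x i : ℤ)) := by
  have hreach {y : Fin k → ℕ} (hy : ∑ i, y i ≤ N) :=
    exists_floor_le_expProfit_le hp0 hp1 (fun i => (ht i).le) (fun y hy => hmax y hy.1 hy.2)
      ⟨hnonneg, hsum⟩ hy
  set T := (Nat.antidiagonalTuple k N).filter fun z => ∀ i, ⌊xstar i⌋₊ ≤ z i
  have hT : ∀ {z}, (∀ i, ⌊xstar i⌋₊ ≤ z i) → ∑ i, z i = N → z ∈ T := fun hmz hz =>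
    mem_filter.2 ⟨Nat.mem_antidiagonalTuple.2 hz, hmz⟩
  obtain ⟨z₀, hmz₀, hz₀, -⟩ := hreach (y := 0) (by simp)
  obtain ⟨x, hxT, hxmax⟩ := T.exists_max_image (expProfit p t) ⟨z₀, hT hmz₀ hz₀⟩
  obtain ⟨hxN, hmx⟩ := mem_filter.1 hxT
  refine ⟨x, Nat.mem_antidiagonalTuple.1 hxN, fun y hy => ?_, fun i => ?_⟩
  · obtain ⟨z, hmz, hz, hyz⟩ := hreach hy
    exact hyz.trans (hxmax z (hT hmz hz))
  · rw [← Int.natCast_floor_eq_floor (hnonneg i)]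
    exact_mod_cast hmx i
end
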